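/- Every 3×3 quantum magic square whose entries are projections is commuting: if A = (A_{ij}) with A_{ij} ∈ Mat_s(ℂ) satisfies A_{ij}² = A_{ij} = A_{ij}*, ∑_k A_{ik} = I_s and ∑_k A_{kj} = I_s for all i, j, then A_{ij} A_{kl} = A_{kl} A_{ij} for all i, j, k, l. -/

import Mathlib

/-!
Two idempotents `p, q` whose sum is idempotent anticommute, and then `pq = -pqp = qp`, so
`2pq = 0`. With three idempotents summing to `1` this applies to `p + q = 1 - r`; hence the
entries of each row and of each column of a `3 × 3` magic square of idempotents are mutually
orthogonal. Now take `x = A i j`, `y = A k l` with `i ≠ k`, `j ≠ l`, and let `z = A m n` be the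
entry in the remaining row and column. Expanding `z` through column `n` and then `A k n` through
row `k` gives `x y = x z`, and symmetrically `y x = z x`. Since the roles of `x, y, z` are
interchangeable, `x y = x z = y z = y x`.
-/

open Matrix BigOperators ComplexOrder

section Idempotent

variable {R : Type*} [Ring R] [IsAddTorsionFree R] {p q r : R}

theorem IsIdempotentElem.mul_eq_zero_of_add (hp : IsIdempotentElem p) (hq : IsIdempotentElem q)
    (hpq : IsIdempotentElem (p + q)) : p * q = 0 := by
  have anti : p * q + q * p = 0 := (hp.add_iff hq).1 hpq
  have hleft : p * q + p * q * p = 0 := by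
    simpa only [mul_add, ← mul_assoc, hp.eq, mul_zero] using congrArg (p * ·) anti
  have hright : p * q * p + q * p = 0 := by
    simpa only [add_mul, mul_assoc, hp.eq, zero_mul] using congrArg (· * p) anti
  have hcomm : p * q = q * p := by
    rw [← neg_eq_of_add_eq_zero_left hleft, neg_eq_of_add_eq_zero_right hright]
  have htwo : 2 • (p * q) = 0 := by rw [two_nsmul]; nth_rewrite 2 [hcomm]; exact anti
  exact (nsmul_eq_zero_iff.1 htwo).resolve_right two_ne_zero

theorem IsIdempotentElem.mul_eq_zero_of_add_add_eq_one (hp : IsIdempotentElem p)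
    (hq : IsIdempotentElem q) (hr : IsIdempotentElem r) (h : p + q + r = 1) : p * q = 0 :=
  hp.mul_eq_zero_of_add hq <| by
    rw [show p + q = 1 - r by rw [← h, add_sub_cancel_right]]
    exact hr.one_sub

end Idempotent

theorem Fin.sum_univ_three_of_ne {M : Type*} [AddCommMonoid M] (f : Fin 3 → M) {a b c : Fin 3}
    (hab : a ≠ b) (hac : a ≠ c) (hbc : b ≠ c) : ∑ x, f x = f a + f b + f c := by
  have huniv : ({a, b, c} : Finset (Fin 3)) = Finset.univ := by revert a b c; decide
  rw [← huniv, Finset.sum_insert (by simp [hab, hac]), Finset.sum_insert (by simp [hbc]),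
    Finset.sum_singleton, add_assoc]

theorem Fin.neg_add_ne_left_and_ne_right :
    ∀ {a b : Fin 3}, a ≠ b → -(a + b) ≠ a ∧ -(a + b) ≠ b := by
  decide

structure IsIdempotentMagicSquare {R ι : Type*} [Ring R] [Fintype ι] (A : ι → ι → R) : Prop where
  isIdempotentElem : ∀ i j, IsIdempotentElem (A i j)
  sum_row : ∀ i, ∑ j, A i j = 1
  sum_col : ∀ j, ∑ i, A i j = 1

namespace IsIdempotentMagicSquare

variable {R : Type*} [Ring R] {A : Fin 3 → Fin 3 → R}

theorem transpose (hA : IsIdempotentMagicSquare A) : IsIdempotentMagicSquare fun i j ↦ A j i :=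
  ⟨fun i j ↦ hA.isIdempotentElem j i, hA.sum_col, hA.sum_row⟩

theorem add_add_row (hA : IsIdempotentMagicSquare A) (i : Fin 3) {j l n : Fin 3}
    (hjl : j ≠ l) (hjn : j ≠ n) (hln : l ≠ n) : A i j + A i l + A i n = 1 := by
  rw [← Fin.sum_univ_three_of_ne (A i) hjl hjn hln]; exact hA.sum_row i

theorem add_add_col (hA : IsIdempotentMagicSquare A) (j : Fin 3) {i k m : Fin 3}
    (hik : i ≠ k) (him : i ≠ m) (hkm : k ≠ m) : A i j + A k j + A m j = 1 :=
  hA.transpose.add_add_row j hik him hkm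

variable [IsAddTorsionFree R] {i j k l m n : Fin 3}

theorem row_mul_eq_zero (hA : IsIdempotentMagicSquare A) (i : Fin 3) (hjl : j ≠ l) :
    A i j * A i l = 0 := by
  obtain ⟨hnj, hnl⟩ := Fin.neg_add_ne_left_and_ne_right hjl
  exact (hA.isIdempotentElem i j).mul_eq_zero_of_add_add_eq_one (hA.isIdempotentElem i l)
    (hA.isIdempotentElem i _) (hA.add_add_row i hjl hnj.symm hnl.symm)

theorem col_mul_eq_zero (hA : IsIdempotentMagicSquare A) (j : Fin 3) (hik : i ≠ k) :
    A i j * A k j = 0 :=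
  hA.transpose.row_mul_eq_zero j hik

theorem mul_eq_mul_left (hA : IsIdempotentMagicSquare A) (hik : i ≠ k) (him : i ≠ m)
    (hkm : k ≠ m) (hjl : j ≠ l) (hjn : j ≠ n) (hln : l ≠ n) :
    A i j * A k l = A i j * A m n := by
  have hmn : A m n = 1 - A i n - A k n := by rw [← hA.add_add_col n hik him hkm]; abel
  have hkn : A k n = 1 - A k j - A k l := by rw [← hA.add_add_row k hjl hjn hln]; abel
  calc A i j * A k l
      = A i j * A k l - A i j * A i n + A i j * A k j := by
        rw [hA.row_mul_eq_zero i hjn, hA.col_mul_eq_zero j hik, sub_zero, add_zero]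
    _ = A i j * A m n := by rw [hmn, hkn]; noncomm_ring

theorem mul_eq_mul_right (hA : IsIdempotentMagicSquare A) (hik : i ≠ k) (him : i ≠ m)
    (hkm : k ≠ m) (hjl : j ≠ l) (hjn : j ≠ n) (hln : l ≠ n) :
    A k l * A i j = A m n * A i j := by
  have hmn : A m n = 1 - A m j - A m l := by rw [← hA.add_add_row m hjl hjn hln]; abel
  have hml : A m l = 1 - A i l - A k l := by rw [← hA.add_add_col l hik him hkm]; abel
  calc A k l * A i j
      = A k l * A i j - A m j * A i j + A i l * A i j := by
        rw [hA.col_mul_eq_zero j him.symm, hA.row_mul_eq_zero i hjl.symm, sub_zero, add_zero]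
    _ = A m n * A i j := by rw [hmn, hml]; noncomm_ring

theorem commute (hA : IsIdempotentMagicSquare A) (i j k l : Fin 3) :
    Commute (A i j) (A k l) := by
  rcases eq_or_ne i k with rfl | hik
  · rcases eq_or_ne j l with rfl | hjl
    · exact Commute.refl _
    · exact (hA.row_mul_eq_zero i hjl).trans (hA.row_mul_eq_zero i hjl.symm).symm
  rcases eq_or_ne j l with rfl | hjl
  · exact (hA.col_mul_eq_zero j hik).trans (hA.col_mul_eq_zero j hik.symm).symm
  obtain ⟨hmi, hmk⟩ := Fin.neg_add_ne_left_and_ne_right hik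
  obtain ⟨hnj, hnl⟩ := Fin.neg_add_ne_left_and_ne_right hjl
  calc A i j * A k l
      = A i j * A (-(i + k)) (-(j + l)) :=
        hA.mul_eq_mul_left hik hmi.symm hmk.symm hjl hnj.symm hnl.symm
    _ = A k l * A (-(i + k)) (-(j + l)) := hA.mul_eq_mul_right hmi hmk hik hnj hnl hjl
    _ = A k l * A i j := hA.mul_eq_mul_left hmk.symm hik.symm hmi hnl.symm hjl.symm hnj

end IsIdempotentMagicSquare

theorem three_by_three_qpm_commuting_general (s : ℕ)
    (A : Fin 3 → Fin 3 → Matrix (Fin s) (Fin s) ℂ)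
    (hproj : ∀ i j, A i j * A i j = A i j)
    (hrow : ∀ i, ∑ k, A i k = 1)
    (hcol : ∀ j, ∑ k, A k j = 1) :
    ∀ i j k l, A i j * A k l = A k l * A i j := by
  have : IsAddTorsionFree (Matrix (Fin s) (Fin s) ℂ) :=
    inferInstanceAs (IsAddTorsionFree (Fin s → Fin s → ℂ))
  exact fun i j k l ↦ (IsIdempotentMagicSquare.mk hproj hrow hcol).commute i j k l

/-- every 3×3 quantum permutation matrix is commuting: if the blocks are
projections with rows and columns summing to the identity, then all blocks pairwise
commute. -/
theorem three_by_three_qpm_commuting (s : ℕ)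
    (A : Fin 3 → Fin 3 → Matrix (Fin s) (Fin s) ℂ)
    (hproj : ∀ i j, A i j * A i j = A i j)
    (hherm : ∀ i j, (A i j)ᴴ = A i j)
    (hrow : ∀ i, ∑ k, A i k = 1)
    (hcol : ∀ j, ∑ k, A k j = 1) :
    ∀ i j k l, A i j * A k l = A k l * A i j :=
  three_by_three_qpm_commuting_general s A hproj hrow hcol
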